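/- arXiv:2407.18954 — 8 statements merged into one kernel-verified Lean document; each statement's English description precedes it below -/
import Mathlib

section
/- Given a {1}-inverse G of A, a matrix X is a {1}-inverse of A if and only if X = G + (I − GA)V + W(I − AG) for some n×m matrices V, W. -/
open Matrix

/-- Column space (range) of a complex matrix. -/
noncomputable def mrange {m n : Type*} [Fintype n] (A : Matrix m n ℂ) : Submodule ℂ (m → ℂ) :=
  LinearMap.range A.mulVecLin

/-- The diamond partial order on rectangular complex matrices. -/
def diamondLE {m n : Type*} [Fintype m] [Fintype n] (A B : Matrix m n ℂ) : Prop :=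
  mrange A ≤ mrange B ∧ mrange Aᴴ ≤ mrange Bᴴ ∧ A * Bᴴ * A = A * Aᴴ * A

/-- `X` satisfies the four Penrose equations for `A`. -/
def IsMP {m n : Type*} [Fintype m] [Fintype n] (A : Matrix m n ℂ) (X : Matrix n m ℂ) : Prop :=
  A * X * A = A ∧ X * A * X = X ∧ (A * X)ᴴ = A * X ∧ (X * A)ᴴ = X * A

namespace Matrix

variable {m n R : Type*} [Fintype m] [Fintype n] [Ring R] {A : Matrix m n R} {G : Matrix n m R}

theorem mul_one_sub_mul_eq_zero [DecidableEq n] (hG : A * G * A = A) : A * (1 - G * A) = 0 := by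
  rw [Matrix.mul_sub, Matrix.mul_one, ← Matrix.mul_assoc, hG, sub_self]

theorem one_sub_mul_mul_eq_zero [DecidableEq m] (hG : A * G * A = A) : (1 - A * G) * A = 0 := by
  rw [Matrix.sub_mul, Matrix.one_mul, hG, sub_self]

theorem mul_add_one_sub_mul_add_mul_one_sub_mul [DecidableEq m] [DecidableEq n]
    (hG : A * G * A = A) (V W : Matrix n m R) :
    A * (G + (1 - G * A) * V + W * (1 - A * G)) * A = A := by
  have hV : A * ((1 - G * A) * V) * A = 0 := by
    rw [← Matrix.mul_assoc, mul_one_sub_mul_eq_zero hG, Matrix.zero_mul, Matrix.zero_mul]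
  have hW : A * (W * (1 - A * G)) * A = 0 := by
    rw [Matrix.mul_assoc, Matrix.mul_assoc, one_sub_mul_mul_eq_zero hG, Matrix.mul_zero,
      Matrix.mul_zero]
  rw [Matrix.mul_add, Matrix.mul_add, Matrix.add_mul, Matrix.add_mul, hG, hV, hW, add_zero,
    add_zero]

/-- Expanded, the right-hand side is `X - G (A (X - G) A) G`. -/
theorem eq_add_one_sub_mul_add_mul_one_sub_mul [DecidableEq m] [DecidableEq n] {X : Matrix n m R}
    (hX : A * (X - G) * A = 0) :
    X = G + (1 - G * A) * (X - G) + G * A * (X - G) * (1 - A * G) := by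
  have hGXG : G * A * (X - G) * (A * G) = 0 := by
    simp only [← Matrix.mul_assoc]
    rw [Matrix.mul_assoc G, Matrix.mul_assoc G, hX, Matrix.mul_zero, Matrix.zero_mul]
  calc X = X - G * A * (X - G) * (A * G) := by rw [hGXG, sub_zero]
    _ = G + (1 - G * A) * (X - G) + G * A * (X - G) * (1 - A * G) := by
      simp only [Matrix.mul_sub, Matrix.sub_mul, Matrix.mul_one, Matrix.one_mul]
      abel

end Matrix

theorem stmt3 {m n : ℕ} (A : Matrix (Fin m) (Fin n) ℂ) (G : Matrix (Fin n) (Fin m) ℂ)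
    (hG : A * G * A = A) (X : Matrix (Fin n) (Fin m) ℂ) :
    A * X * A = A ↔ ∃ V W : Matrix (Fin n) (Fin m) ℂ,
      X = G + (1 - G * A) * V + W * (1 - A * G) := by
  constructor
  · intro hX
    have hXG : A * (X - G) * A = 0 := by rw [Matrix.mul_sub, Matrix.sub_mul, hX, hG, sub_self]
    exact ⟨X - G, G * A * (X - G), eq_add_one_sub_mul_add_mul_one_sub_mul hXG⟩
  · rintro ⟨V, W, rfl⟩
    exact mul_add_one_sub_mul_add_mul_one_sub_mul hG V W
end

section
/- If A ≤⋄ B (diamond order), then A† = A† B A†, where A† is the Moore-Penrose inverse of A. -/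
open Matrix

namespace IsMP

variable {m n : Type*} [Fintype m] [Fintype n] {A : Matrix m n ℂ} {X : Matrix n m ℂ}

theorem eq_mul_conjTranspose_mul_conjTranspose (hX : IsMP A X) : X = X * Xᴴ * Aᴴ := by
  calc X = X * (A * X) := by rw [← Matrix.mul_assoc, hX.2.1]
    _ = X * (A * X)ᴴ := by rw [hX.2.2.1]
    _ = X * Xᴴ * Aᴴ := by rw [conjTranspose_mul, Matrix.mul_assoc]

theorem eq_conjTranspose_mul_conjTranspose_mul (hX : IsMP A X) : X = Aᴴ * Xᴴ * X := by
  calc X = X * A * X := hX.2.1.symm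
    _ = (X * A)ᴴ * X := by rw [hX.2.2.2]
    _ = Aᴴ * Xᴴ * X := by rw [conjTranspose_mul]

/-- `X` factors through `Aᴴ` on both sides, so only `Aᴴ * B * Aᴴ` enters `X * B * X`. -/
theorem mul_mul_eq_self_of_conjTranspose_mul_mul_eq {B : Matrix m n ℂ} (hX : IsMP A X)
    (hB : Aᴴ * B * Aᴴ = Aᴴ * A * Aᴴ) : X * B * X = X := by
  have hL := hX.eq_mul_conjTranspose_mul_conjTranspose
  have hR := hX.eq_conjTranspose_mul_conjTranspose_mul
  calc X * B * X = (X * Xᴴ * Aᴴ) * B * (Aᴴ * Xᴴ * X) := by rw [← hL, ← hR]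
    _ = X * Xᴴ * (Aᴴ * B * Aᴴ) * Xᴴ * X := by simp only [Matrix.mul_assoc]
    _ = X * Xᴴ * (Aᴴ * A * Aᴴ) * Xᴴ * X := by rw [hB]
    _ = (X * Xᴴ * Aᴴ) * A * (Aᴴ * Xᴴ * X) := by simp only [Matrix.mul_assoc]
    _ = X := by rw [← hL, ← hR, hX.2.1]

end IsMP

theorem diamondLE.conjTranspose_mul_mul_eq {m n : Type*} [Fintype m] [Fintype n]
    {A B : Matrix m n ℂ} (h : diamondLE A B) : Aᴴ * B * Aᴴ = Aᴴ * A * Aᴴ := by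
  simpa only [conjTranspose_mul, conjTranspose_conjTranspose, Matrix.mul_assoc]
    using congrArg conjTranspose h.2.2

theorem stmt4 {m n : ℕ} (A B : Matrix (Fin m) (Fin n) ℂ) (Ad : Matrix (Fin n) (Fin m) ℂ)
    (hAd : IsMP A Ad) (h : diamondLE A B) : Ad = Ad * B * Ad :=
  (hAd.mul_mul_eq_self_of_conjTranspose_mul_mul_eq h.conjTranspose_mul_mul_eq).symm
end

section
/- For m×n complex matrices A and B, A ≤⋄ B holds if and only if A† = A† B A†, A = B B† A, and A = A B† B. -/
/-!
Since `B B† B = B`, `range A ⊆ range B` holds exactly when the projection `B B†` fixes `A`, and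
dually for `A*`. For the third condition, the Penrose equations give
`A† = A† A†* A* = A* A†* A†` and `A = A A* A†* = A†* A* A`, so sandwiching the adjoint of one of
`A B* A = A A* A` and `A† B A† = A†` between these factors turns it into the other.
-/

open Matrix

variable {m n k : Type*} [Fintype m] [Fintype n] [Fintype k]

theorem mrange_le_mrange_iff {A : Matrix m n ℂ} {B : Matrix m k ℂ} {Bd : Matrix k m ℂ}
    (hB : B * Bd * B = B) : mrange A ≤ mrange B ↔ A = B * Bd * A := by
  constructor
  · intro h
    refine ext_iff_mulVec.2 fun v => ?_
    obtain ⟨w, hw⟩ := h ⟨v, rfl⟩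
    simp only [mulVecLin_apply] at hw
    rw [← hw, ← mulVec_mulVec, ← hw, mulVec_mulVec, hB]
  · intro h
    rw [h, Matrix.mul_assoc, mrange, mrange, mulVecLin_mul]
    exact LinearMap.range_comp_le_range _ _

theorem mrange_conjTranspose_le_iff {A B : Matrix m n ℂ} {Bd : Matrix n m ℂ}
    (hB : B * Bd * B = B) : mrange Aᴴ ≤ mrange Bᴴ ↔ A = A * Bd * B := by
  have hBH : Bᴴ * Bdᴴ * Bᴴ = Bᴴ := by
    simpa only [conjTranspose_mul, Matrix.mul_assoc] using congrArg conjTranspose hB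
  rw [mrange_le_mrange_iff hBH, ← conjTranspose_inj]
  simp only [conjTranspose_mul, conjTranspose_conjTranspose, Matrix.mul_assoc]

theorem IsMP.mul_conjTranspose_mul_eq_iff {A : Matrix m n ℂ} {X : Matrix n m ℂ} (hX : IsMP A X)
    (C : Matrix m n ℂ) : A * Cᴴ * A = A * Aᴴ * A ↔ X = X * C * X := by
  obtain ⟨hAXA, hXAX, hAX, hXA⟩ := hX
  have hX_left : X * Xᴴ * Aᴴ = X := by
    rw [Matrix.mul_assoc, ← conjTranspose_mul, hAX, ← Matrix.mul_assoc, hXAX]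
  have hX_right : Aᴴ * Xᴴ * X = X := by rw [← conjTranspose_mul, hXA, hXAX]
  have hA_left : A * Aᴴ * Xᴴ = A := by
    rw [Matrix.mul_assoc, ← conjTranspose_mul, hXA, ← Matrix.mul_assoc, hAXA]
  have hA_right : Xᴴ * Aᴴ * A = A := by rw [← conjTranspose_mul, hAX, hAXA]
  constructor
  · intro h
    have hH : Aᴴ * C * Aᴴ = Aᴴ * A * Aᴴ := by
      simpa only [conjTranspose_mul, conjTranspose_conjTranspose, Matrix.mul_assoc]
        using congrArg conjTranspose h
    calc X = (X * Xᴴ * Aᴴ) * A * (Aᴴ * Xᴴ * X) := by rw [hX_left, hX_right, hXAX]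
      _ = X * Xᴴ * (Aᴴ * A * Aᴴ) * Xᴴ * X := by simp only [Matrix.mul_assoc]
      _ = (X * Xᴴ * Aᴴ) * C * (Aᴴ * Xᴴ * X) := by rw [← hH]; simp only [Matrix.mul_assoc]
      _ = X * C * X := by rw [hX_left, hX_right]
  · intro h
    have hH : Xᴴ * Cᴴ * Xᴴ = Xᴴ := by
      simpa only [conjTranspose_mul, Matrix.mul_assoc] using (congrArg conjTranspose h).symm
    calc A * Cᴴ * A = (A * Aᴴ * Xᴴ) * Cᴴ * (Xᴴ * Aᴴ * A) := by rw [hA_left, hA_right]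
      _ = A * Aᴴ * (Xᴴ * Cᴴ * Xᴴ) * Aᴴ * A := by simp only [Matrix.mul_assoc]
      _ = A * Aᴴ * Xᴴ * Aᴴ * A := by rw [hH]
      _ = A * Aᴴ * A := by rw [hA_left]

theorem stmt5 {m n : ℕ} (A B : Matrix (Fin m) (Fin n) ℂ) (Ad Bd : Matrix (Fin n) (Fin m) ℂ)
    (hAd : IsMP A Ad) (hBd : IsMP B Bd) :
    diamondLE A B ↔ (Ad = Ad * B * Ad ∧ A = B * Bd * A ∧ A = A * Bd * B) := by
  rw [diamondLE, mrange_le_mrange_iff hBd.1, mrange_conjTranspose_le_iff hBd.1,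
    hAd.mul_conjTranspose_mul_eq_iff]
  exact and_rotate.symm
end

section
/- For m×n complex matrices A and B, A ≤⋄ B holds if and only if A† = A† B A† = A† B B† = B† B A†. -/
open Matrix

/-!
For a Moore–Penrose inverse `X` of `B`, `mrange A ≤ mrange B` holds iff `B X A = A`. Hence the
three conditions of `A ≤⋄ B` read `B B† A = A`, `A B† B = A` and `A B* A = A A* A`, and they match
the three identities one by one. As `B B†` and `B† B` are Hermitian, `B B† A = A` is equivalent to
`A† B B† = A†` (through `A† = A† A†* A*`), and likewise for `B† B`. Finally
`A† M A† = A† A†* (A* M A*) A†* A†`, so `A† B A† = A† A A† = A†` follows from `A* B A* = A* A A*`,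
the adjoint of `A B* A = A A* A`; the converse is the same argument for the pair `(A†, A)`.
-/

theorem mrange_le_iff_mul_mul_eq {k m n : Type*} [Fintype k] [Fintype m] [Fintype n]
    {A : Matrix k n ℂ} {B : Matrix k m ℂ} {X : Matrix m k ℂ} (hB : B * X * B = B) :
    mrange A ≤ mrange B ↔ B * X * A = A := by
  classical
  refine ⟨fun h => ?_, fun h => ?_⟩
  · refine Matrix.toLin'.injective (LinearMap.ext fun v => ?_)
    obtain ⟨x, hx⟩ := h (LinearMap.mem_range_self A.mulVecLin v)
    simp only [mulVecLin_apply] at hx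
    simp only [toLin'_apply, ← mulVec_mulVec, ← hx]
    rw [mulVec_mulVec, mulVec_mulVec, hB]
  · rw [← h, mrange, Matrix.mul_assoc, mulVecLin_mul]
    exact LinearMap.range_comp_le_range _ _

namespace IsMP

variable {m n : Type*} [Fintype m] [Fintype n] {A : Matrix m n ℂ} {X : Matrix n m ℂ}

theorem symm (h : IsMP A X) : IsMP X A :=
  ⟨h.2.1, h.1, h.2.2.2, h.2.2.1⟩

theorem isHermitian_mul (h : IsMP A X) : (A * X).IsHermitian :=
  h.2.2.1

theorem conjTranspose (h : IsMP A X) : IsMP Aᴴ Xᴴ := by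
  obtain ⟨h₁, h₂, h₃, h₄⟩ := h
  refine ⟨?_, ?_, by rw [← conjTranspose_mul, h₄, h₄], by rw [← conjTranspose_mul, h₃, h₃]⟩
  · simpa only [conjTranspose_mul, Matrix.mul_assoc] using congrArg Matrix.conjTranspose h₁
  · simpa only [conjTranspose_mul, Matrix.mul_assoc] using congrArg Matrix.conjTranspose h₂

theorem eq_mul_conjTranspose_mul (h : IsMP A X) : X = X * Xᴴ * Aᴴ := by
  conv_lhs => rw [← h.2.1, Matrix.mul_assoc, ← h.2.2.1, conjTranspose_mul, ← Matrix.mul_assoc]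

theorem eq_conjTranspose_mul_mul (h : IsMP A X) : X = Aᴴ * Xᴴ * X := by
  conv_lhs => rw [← h.2.1, ← h.2.2.2, conjTranspose_mul]

theorem mul_mul_eq (h : IsMP A X) (M : Matrix m n ℂ) :
    X * M * X = X * Xᴴ * (Aᴴ * M * Aᴴ) * Xᴴ * X := by
  calc X * M * X = (X * Xᴴ * Aᴴ) * M * (Aᴴ * Xᴴ * X) := by
        rw [← h.eq_mul_conjTranspose_mul, ← h.eq_conjTranspose_mul_mul]
    _ = X * Xᴴ * (Aᴴ * M * Aᴴ) * Xᴴ * X := by simp only [Matrix.mul_assoc]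

theorem mul_conjTranspose_mul_eq_iff_s6 (h : IsMP A X) (M : Matrix m n ℂ) :
    A * Mᴴ * A = A * Aᴴ * A ↔ X * M * X = X := by
  constructor
  · intro hM
    have hM' : Aᴴ * M * Aᴴ = Aᴴ * A * Aᴴ := by
      simpa only [conjTranspose_mul, conjTranspose_conjTranspose, Matrix.mul_assoc]
        using congrArg Matrix.conjTranspose hM
    rw [h.mul_mul_eq, hM', ← h.mul_mul_eq, h.2.1]
  · intro hM
    have hM' : Xᴴ * Mᴴ * Xᴴ = Xᴴ * Aᴴ * Xᴴ := by
      simpa only [conjTranspose_mul, Matrix.mul_assoc]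
        using congrArg Matrix.conjTranspose (hM.trans h.2.1.symm)
    rw [h.symm.mul_mul_eq, hM', ← h.symm.mul_mul_eq]

theorem mul_eq_self_of_isHermitian_mul_eq_self {P : Matrix m m ℂ} (h : IsMP A X)
    (hP : P.IsHermitian) (hPA : P * A = A) : X * P = X := by
  have hAP : Aᴴ * P = Aᴴ := by rw [← hP.eq, ← conjTranspose_mul, hPA]
  conv_lhs => rw [h.eq_mul_conjTranspose_mul, Matrix.mul_assoc, hAP, ← h.eq_mul_conjTranspose_mul]

theorem isHermitian_mul_eq_self_iff {P : Matrix m m ℂ} (h : IsMP A X) (hP : P.IsHermitian) :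
    P * A = A ↔ X * P = X := by
  refine ⟨h.mul_eq_self_of_isHermitian_mul_eq_self hP, fun hXP => ?_⟩
  have hPX : P * Xᴴ = Xᴴ := by rw [← hP.eq, ← conjTranspose_mul, hXP]
  rw [← conjTranspose_inj, conjTranspose_mul, hP.eq]
  exact h.conjTranspose.symm.mul_eq_self_of_isHermitian_mul_eq_self hP hPX

theorem mul_isHermitian_eq_self_iff {Q : Matrix n n ℂ} (h : IsMP A X) (hQ : Q.IsHermitian) :
    A * Q = A ↔ Q * X = X := by
  rw [← conjTranspose_inj, conjTranspose_mul, hQ.eq, h.conjTranspose.isHermitian_mul_eq_self_iff hQ,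
    ← conjTranspose_inj, conjTranspose_mul, conjTranspose_conjTranspose, hQ.eq]

end IsMP

theorem stmt6 {m n : ℕ} (A B : Matrix (Fin m) (Fin n) ℂ) (Ad Bd : Matrix (Fin n) (Fin m) ℂ)
    (hAd : IsMP A Ad) (hBd : IsMP B Bd) :
    diamondLE A B ↔ (Ad = Ad * B * Ad ∧ Ad = Ad * B * Bd ∧ Ad = Bd * B * Ad) := by
  have hrange : mrange Aᴴ ≤ mrange Bᴴ ↔ A * (Bd * B) = A := by
    rw [mrange_le_iff_mul_mul_eq hBd.conjTranspose.1, ← conjTranspose_inj]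
    simp only [conjTranspose_mul, conjTranspose_conjTranspose, Matrix.mul_assoc]
  rw [diamondLE, mrange_le_iff_mul_mul_eq hBd.1, hrange, hAd.mul_conjTranspose_mul_eq_iff_s6,
    hAd.isHermitian_mul_eq_self_iff hBd.isHermitian_mul,
    hAd.mul_isHermitian_eq_self_iff hBd.symm.isHermitian_mul]
  simp only [Matrix.mul_assoc, eq_comm (a := Ad)]
  exact and_rotate.symm
end

section
/- If A ≤⋄ B, then A A† = A A† B B† A A†; that is, B B† is a {1}-inverse of the orthogonal projector A A†. -/
open Matrix

theorem Matrix.mul_mul_eq_of_range_mulVecLin_le {R l m n : Type*} [CommRing R]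
    [Fintype l] [Fintype m] [Fintype n] {A : Matrix m l R} {B : Matrix m n R} {X : Matrix n m R}
    (hB : B * X * B = B) (hAB : LinearMap.range A.mulVecLin ≤ LinearMap.range B.mulVecLin) :
    B * X * A = A := by
  refine Matrix.ext_iff_mulVec.mpr fun v => ?_
  obtain ⟨w, hw⟩ := hAB ⟨v, rfl⟩
  simp only [mulVecLin_apply] at hw
  rw [← mulVec_mulVec, ← hw, mulVec_mulVec, hB]

theorem stmt8 {m n : ℕ} (A B : Matrix (Fin m) (Fin n) ℂ) (Ad Bd : Matrix (Fin n) (Fin m) ℂ)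
    (hAd : IsMP A Ad) (hBd : IsMP B Bd) (h : diamondLE A B) :
    A * Ad = A * Ad * (B * Bd) * (A * Ad) := by
  have hBBdA : B * Bd * A = A := Matrix.mul_mul_eq_of_range_mulVecLin_le hBd.1 h.1
  calc A * Ad = A * Ad * A * Ad := by rw [hAd.1]
    _ = A * Ad * (B * Bd) * (A * Ad) := by
      rw [Matrix.mul_assoc (A * Ad) (B * Bd), ← Matrix.mul_assoc (B * Bd), hBBdA,
        ← Matrix.mul_assoc]
end

section
/- If A ≤⋄ B, then A A† = A B† B A† and A† A = A† B B† A. -/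
open Matrix

/-! Since `B X B = B`, the projector `B X` fixes the range of `B`, hence every column of `A`;
the same argument for conjugate transposes gives `A X B = A`. -/

section

variable {p q r : Type*} [Fintype p] [Fintype q] [Fintype r]

theorem mul_mul_eq_of_mrange_le {A : Matrix p r ℂ} {B : Matrix p q ℂ} {X : Matrix q p ℂ}
    (hB : B * X * B = B) (hAB : mrange A ≤ mrange B) : B * X * A = A := by
  refine Matrix.ext_iff_mulVec.mpr fun v => ?_
  obtain ⟨y, hy⟩ := hAB ⟨v, rfl⟩
  simp only [mulVecLin_apply] at hy
  rw [← mulVec_mulVec, ← hy, mulVec_mulVec, hB]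

theorem mul_mul_eq_of_mrange_conjTranspose_le {A : Matrix r p ℂ}
    {B : Matrix q p ℂ} {X : Matrix p q ℂ} (hB : B * X * B = B) (hAB : mrange Aᴴ ≤ mrange Bᴴ) :
    A * X * B = A := by
  have hBH : Bᴴ * Xᴴ * Bᴴ = Bᴴ := by
    rw [← conjTranspose_mul, ← conjTranspose_mul, ← Matrix.mul_assoc, hB]
  simpa only [conjTranspose_mul, conjTranspose_conjTranspose, Matrix.mul_assoc] using
    congrArg conjTranspose (mul_mul_eq_of_mrange_le hBH hAB)

end

theorem stmt9_general {m n : ℕ} (A B : Matrix (Fin m) (Fin n) ℂ) (Ad Bd : Matrix (Fin n) (Fin m) ℂ)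
    (hBd : IsMP B Bd) (h : diamondLE A B) :
    A * Ad = A * Bd * B * Ad ∧ Ad * A = Ad * B * Bd * A := by
  have hcol : B * Bd * A = A := mul_mul_eq_of_mrange_le hBd.1 h.1
  have hrow : A * Bd * B = A := mul_mul_eq_of_mrange_conjTranspose_le hBd.1 h.2.1
  constructor
  · rw [hrow]
  · rw [Matrix.mul_assoc (Ad * B), Matrix.mul_assoc Ad, ← Matrix.mul_assoc B, hcol]

theorem stmt9 {m n : ℕ} (A B : Matrix (Fin m) (Fin n) ℂ) (Ad Bd : Matrix (Fin n) (Fin m) ℂ)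
    (hAd : IsMP A Ad) (hBd : IsMP B Bd) (h : diamondLE A B) :
    A * Ad = A * Bd * B * Ad ∧ Ad * A = Ad * B * Bd * A :=
  stmt9_general A B Ad Bd hBd h
end

section
/- If for some {1}-inverse A⁻ of A the matrix G = A⁻ A A† satisfies G A = G B and A G = B G, then A *≤ B (i.e., A* A = A* B and range(A) ⊆ range(B)). -/
open Matrix

/-!
Write `G = A⁻ A A†`. Multiplying `G A = G B` on the left by `A` and using `A A⁻ A = A` and
`A A† A = A` gives `A = A A† B`; since `A A†` is Hermitian, `A* A A† = A*`, whence `A* A = A* B`.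
Likewise `A G = B G` gives `A A† = B G`, so `A = A A† A = B (G A)` lies in the range of `B`.
-/

section InnerInverse

variable {R : Type*} [Semiring R] {m n : Type*} [Fintype m] [Fintype n]
  {A B : Matrix m n R} {Am Ad : Matrix n m R}

theorem eq_mul_inner_inverse_mul_of_mul_left_eq (hAm : A * Am * A = A) (hAd : A * Ad * A = A)
    (h : Am * A * Ad * A = Am * A * Ad * B) : A = A * Ad * B :=
  calc A = A * Am * A * Ad * A := by rw [hAm, hAd]
    _ = A * (Am * A * Ad * A) := by simp only [Matrix.mul_assoc]
    _ = A * (Am * A * Ad * B) := by rw [h]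
    _ = A * Ad * B := by simp only [← Matrix.mul_assoc, hAm]

theorem eq_mul_mul_self_of_mul_right_eq (hAm : A * Am * A = A) (hAd : A * Ad * A = A)
    (h : A * (Am * A * Ad) = B * (Am * A * Ad)) : A = B * (Am * A * Ad * A) :=
  calc A = A * (Am * A * Ad) * A := by simp only [← Matrix.mul_assoc, hAm, hAd]
    _ = B * (Am * A * Ad * A) := by rw [h, Matrix.mul_assoc]

end InnerInverse

theorem conjTranspose_mul_mul_eq_of_isHermitian {R : Type*} [Semiring R] [StarRing R]
    {m n : Type*} [Fintype m] [Fintype n] {A : Matrix m n R} {X : Matrix n m R}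
    (hAX : A * X * A = A) (hHerm : (A * X)ᴴ = A * X) : Aᴴ * (A * X) = Aᴴ := by
  rw [← hHerm, ← conjTranspose_mul, hAX]

theorem mrange_le_of_eq_mul {m n k : Type*} [Fintype n] [Fintype k] {A : Matrix m n ℂ}
    {B : Matrix m k ℂ} (C : Matrix k n ℂ) (h : A = B * C) : mrange A ≤ mrange B := by
  rw [mrange, mrange, h, mulVecLin_mul]
  exact LinearMap.range_comp_le_range _ _

theorem stmt16 {m n : ℕ} (A B : Matrix (Fin m) (Fin n) ℂ) (Ad Am : Matrix (Fin n) (Fin m) ℂ)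
    (hAd : IsMP A Ad) (hAm : A * Am * A = A)
    (hGA : (Am * A * Ad) * A = (Am * A * Ad) * B)
    (hAG : A * (Am * A * Ad) = B * (Am * A * Ad)) :
    Aᴴ * A = Aᴴ * B ∧ mrange A ≤ mrange B := by
  obtain ⟨hAdA, -, hHerm, -⟩ := hAd
  have hA : A = A * Ad * B := eq_mul_inner_inverse_mul_of_mul_left_eq hAm hAdA hGA
  refine ⟨?_, mrange_le_of_eq_mul _ (eq_mul_mul_self_of_mul_right_eq hAm hAdA hAG)⟩
  calc Aᴴ * A = Aᴴ * (A * Ad * B) := by rw [← hA]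
    _ = Aᴴ * (A * Ad) * B := by simp only [Matrix.mul_assoc]
    _ = Aᴴ * B := by rw [conjTranspose_mul_mul_eq_of_isHermitian hAdA hHerm]
end

section
/- If for some {1}-inverse A⁻ of A the matrix H = A† A A⁻ satisfies H A = H B and A H = B H, then A ≤* B (i.e., A A* = B A* and range(A*) ⊆ range(B*)). -/
/-!
Since `A⁻` and `A†` are inner inverses of `A`, so is `H = A† A A⁻`, i.e. `A H A = A`.
Multiplying `A H = B H` on the right by `A` therefore gives `B A† A = A`, and since `A† A` is the
orthogonal projector onto `range(A*)`, `A A* = B A† A A* = B A*`. Multiplying `H A = H B` on the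
left by `A` gives `A A⁻ B = A`, so `A* = B* (A A⁻)*` and `range(A*) ⊆ range(B*)`.
-/

open Matrix

theorem mrange_mul_le {l m n : Type*} [Fintype m] [Fintype n] (A : Matrix l m ℂ)
    (C : Matrix m n ℂ) : mrange (A * C) ≤ mrange A := by
  rw [mrange, mulVecLin_mul]
  exact LinearMap.range_comp_le_range _ _

section InnerInverse

variable {m n R : Type*} [Fintype m] [Fintype n] [Semiring R] {A B : Matrix m n R}
  {X Y : Matrix n m R}

theorem mul_mul_mul_inner_inverse (hX : A * X * A = A) (hY : A * Y * A = A) :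
    A * (X * A * Y) * A = A := by
  simp only [← Matrix.mul_assoc, hX, hY]

theorem mul_mul_eq_of_mul_inner_inverse_eq (hX : A * X * A = A) (hY : A * Y * A = A)
    (h : A * (X * A * Y) = B * (X * A * Y)) : B * X * A = A :=
  calc B * X * A = B * X * (A * Y * A) := by rw [hY]
    _ = B * (X * A * Y) * A := by simp only [Matrix.mul_assoc]
    _ = A := by rw [← h, mul_mul_mul_inner_inverse hX hY]

theorem mul_mul_eq_of_inner_inverse_mul_eq (hX : A * X * A = A) (hY : A * Y * A = A)
    (h : (X * A * Y) * A = (X * A * Y) * B) : A * Y * B = A :=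
  calc A * Y * B = A * X * A * Y * B := by rw [hX]
    _ = A * (X * A * Y) * B := by simp only [Matrix.mul_assoc]
    _ = A := by rw [Matrix.mul_assoc A, ← h, ← Matrix.mul_assoc, mul_mul_mul_inner_inverse hX hY]

end InnerInverse

theorem mul_mul_conjTranspose_of_inner_inverse {m n : Type*} [Fintype m] [Fintype n]
    {A : Matrix m n ℂ} {X : Matrix n m ℂ} (hX : A * X * A = A) (hXA : (X * A)ᴴ = X * A) :
    X * A * Aᴴ = Aᴴ := by
  rw [← hXA, ← conjTranspose_mul, ← Matrix.mul_assoc, hX]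

theorem stmt17 {m n : ℕ} (A B : Matrix (Fin m) (Fin n) ℂ) (Ad Am : Matrix (Fin n) (Fin m) ℂ)
    (hAd : IsMP A Ad) (hAm : A * Am * A = A)
    (hHA : (Ad * A * Am) * A = (Ad * A * Am) * B)
    (hAH : A * (Ad * A * Am) = B * (Ad * A * Am)) :
    A * Aᴴ = B * Aᴴ ∧ mrange Aᴴ ≤ mrange Bᴴ := by
  obtain ⟨hAAd, -, -, hAdA⟩ := hAd
  have hB : B * Ad * A = A := mul_mul_eq_of_mul_inner_inverse_eq hAAd hAm hAH
  have hA : A * Am * B = A := mul_mul_eq_of_inner_inverse_mul_eq hAAd hAm hHA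
  refine ⟨?_, ?_⟩
  · calc A * Aᴴ = B * (Ad * A * Aᴴ) := by rw [← Matrix.mul_assoc, ← Matrix.mul_assoc, hB]
      _ = B * Aᴴ := by rw [mul_mul_conjTranspose_of_inner_inverse hAAd hAdA]
  · calc mrange Aᴴ = mrange (Bᴴ * (A * Am)ᴴ) := by rw [← conjTranspose_mul, hA]
      _ ≤ mrange Bᴴ := mrange_mul_le _ _
end
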